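/- Lemma 3.1 (characterization of the uncontrollable subspace): Let Z be a separable Hilbert space with orthonormal basis (φ_{nj})_{n≥1,1≤j≤r_n}, let the μ_n be pairwise distinct reals bounded above, let S(t) be the associated diagonal semigroup, g_1,…,g_p ∈ Z, and B* z = (⟨z,g_i⟩)_{i=1}^p. Define N = ∩_{t≥0} ker(B* S(t)*) and B_n ∈ ℝ^{p×r_n} with entries (B_n)_{ij} = ⟨g_i, φ_{nj}⟩. Then N equals the closed span of all vectors Σ_{j=1}^{r_n} α_j φ_{nj} over n ≥ 1 and α = (α_1,…,α_{r_n})^T ∈ ker B_n (i.e., B_n α = 0). -/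

import Mathlib

/-!
For `x, y` write `⟪S(t) x, y⟫ = ∑ₙ e^{μₙ t} cₙ` with `cₙ = ∑ⱼ ⟪x, φₙⱼ⟫ ⟪φₙⱼ, y⟫`, an absolutely
summable sequence. If `x ∈ N` and `y = gᵢ`, taking `t = k ∈ ℕ` shows that the discrete measure
`∑ₙ cₙ δ_{e^{μₙ}}` on `[0, e^{sup μ}]` has vanishing moments; by Weierstrass it annihilates every
continuous function, and tent functions at the distinct points `e^{μₙ}` isolate each `cₙ`. So every
block component `∑ⱼ ⟪φₙⱼ, x⟫ φₙⱼ` of `x` is a generator. Conversely `S(t)` is self-adjoint and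
acts on the `n`-th block as `e^{μₙ t}`, so every generator is orthogonal to each `S(t) gᵢ`.
-/

open Set Filter Topology Polynomial
open scoped RealInnerProductSpace

namespace HilbertBasis

variable {ι E : Type*} [NormedAddCommGroup E] [InnerProductSpace ℝ E]
  (b : HilbertBasis ι ℝ E)

/-- A junk `0` unless the series converges, which it does when `a` is bounded. -/
noncomputable def diagonal (a : ι → ℝ) (x : E) : E :=
  ∑' i, (a i * ⟪x, b i⟫) • b i

theorem inner_basis_diagonal {a : ι → ℝ} {C : ℝ} (ha : ∀ i, |a i| ≤ C) (x : E) (i : ι) :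
    ⟪b i, b.diagonal a x⟫ = a i * ⟪x, b i⟫ := by
  have hmem : Memℓp (fun i => a i * ⟪x, b i⟫) 2 :=
    ((lp.memℓp (b.repr x)).norm.const_mul C).mono fun i => by
      rw [norm_mul, b.repr_apply_apply, real_inner_comm]
      exact mul_le_mul_of_nonneg_right (ha i) (norm_nonneg _)
  have hdiag : b.diagonal a x = b.repr.symm ⟨_, hmem⟩ :=
    (b.hasSum_repr_symm ⟨_, hmem⟩).tsum_eq
  rw [← b.repr_apply_apply, hdiag, LinearIsometryEquiv.apply_symm_apply]

theorem hasSum_inner_diagonal {a : ι → ℝ} {C : ℝ} (ha : ∀ i, |a i| ≤ C) (x y : E) :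
    HasSum (fun i => a i * ⟪x, b i⟫ * ⟪b i, y⟫) ⟪b.diagonal a x, y⟫ := by
  simpa only [real_inner_comm (b _), b.inner_basis_diagonal ha] using
    b.hasSum_inner_mul_inner (b.diagonal a x) y

theorem inner_diagonal_comm {a : ι → ℝ} {C : ℝ} (ha : ∀ i, |a i| ≤ C) (x y : E) :
    ⟪b.diagonal a x, y⟫ = ⟪x, b.diagonal a y⟫ := by
  rw [real_inner_comm (b.diagonal a y) x, ← (b.hasSum_inner_diagonal ha x y).tsum_eq,
    ← (b.hasSum_inner_diagonal ha y x).tsum_eq]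
  congr 1 with i
  rw [real_inner_comm (b i) y, real_inner_comm x]
  ring

end HilbertBasis

section Moments

variable {ι : Type*} {c x : ι → ℝ} {a b : ℝ}

theorem summable_mul_comp_of_continuousOn (hc : Summable c) (hx : ∀ i, x i ∈ Icc a b)
    {f : ℝ → ℝ} (hf : ContinuousOn f (Icc a b)) : Summable fun i => c i * f (x i) := by
  obtain ⟨C, hC⟩ := isCompact_Icc.exists_bound_of_continuousOn hf
  refine hc.abs.mul_right C |>.of_norm_bounded fun i => ?_
  rw [norm_mul, Real.norm_eq_abs]
  exact mul_le_mul_of_nonneg_left (hC _ (hx i)) (abs_nonneg _)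

theorem tsum_mul_eval_eq_zero_of_moments (hc : Summable c) (hx : ∀ i, x i ∈ Icc a b)
    (hmom : ∀ k : ℕ, ∑' i, c i * x i ^ k = 0) (p : ℝ[X]) :
    ∑' i, c i * p.eval (x i) = 0 := by
  induction p using Polynomial.induction_on' with
  | add p q hp hq =>
    have hsum (p : ℝ[X]) := summable_mul_comp_of_continuousOn hc hx p.continuous.continuousOn
    simp only [eval_add, mul_add]
    rw [(hsum p).tsum_add (hsum q), hp, hq, add_zero]
  | monomial k r =>
    simp only [eval_monomial, mul_left_comm _ r, tsum_mul_left, hmom, mul_zero]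

theorem tsum_mul_comp_eq_zero_of_moments (hc : Summable c) (hx : ∀ i, x i ∈ Icc a b)
    (hmom : ∀ k : ℕ, ∑' i, c i * x i ^ k = 0) {f : ℝ → ℝ} (hf : ContinuousOn f (Icc a b)) :
    ∑' i, c i * f (x i) = 0 := by
  have hsmall : ∀ ε > 0, |∑' i, c i * f (x i)| ≤ ε * ∑' i, |c i| := by
    intro ε hε
    obtain ⟨p, hp⟩ := exists_polynomial_near_of_continuousOn a b f hf ε hε
    have hpoly := tsum_mul_eval_eq_zero_of_moments hc hx hmom p
    have hfp := (summable_mul_comp_of_continuousOn hc hx hf).tsum_sub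
      (summable_mul_comp_of_continuousOn hc hx p.continuous.continuousOn)
    rw [hpoly, sub_zero] at hfp
    rw [← hfp, ← Real.norm_eq_abs, mul_comm, ← tsum_mul_right]
    refine tsum_of_norm_bounded (hc.abs.mul_right ε).hasSum fun i => ?_
    rw [Real.norm_eq_abs, ← mul_sub, abs_mul, abs_sub_comm]
    exact mul_le_mul_of_nonneg_left (hp _ (hx i)).le (abs_nonneg _)
  refine abs_nonpos_iff.1 (le_of_forall_pos_le_add fun δ hδ => ?_)
  calc |∑' i, c i * f (x i)| ≤ δ / (∑' i, |c i| + 1) * ∑' i, |c i| := hsmall _ (by positivity)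
    _ ≤ 0 + δ := by
      rw [zero_add, div_mul_eq_mul_div, div_le_iff₀ (by positivity)]
      nlinarith

theorem tendsto_tent (y₀ y : ℝ) :
    Tendsto (fun m : ℕ => max 0 (1 - m * |y - y₀|)) atTop (𝓝 (if y = y₀ then 1 else 0)) := by
  by_cases hy : y = y₀
  · simp [hy]
  rw [if_neg hy]
  have hpos : 0 < |y - y₀| := abs_pos.2 (sub_ne_zero.2 hy)
  refine tendsto_const_nhds.congr' ?_
  filter_upwards [tendsto_natCast_atTop_atTop.eventually_ge_atTop (|y - y₀|⁻¹)] with m hm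
  refine (max_eq_left ?_).symm
  rw [sub_nonpos, ← div_le_iff₀ hpos, one_div]
  exact hm

theorem eq_zero_of_moments (hc : Summable c) (hx : ∀ i, x i ∈ Icc a b)
    (hinj : Function.Injective x) (hmom : ∀ k : ℕ, ∑' i, c i * x i ^ k = 0) : c = 0 := by
  classical
  funext i₀
  have hlim : Tendsto (fun m : ℕ => ∑' i, c i * max 0 (1 - m * |x i - x i₀|)) atTop
      (𝓝 (∑' i, c i * if i = i₀ then 1 else 0)) := by
    refine tendsto_tsum_of_dominated_convergence hc.norm (fun i => ?_) (Eventually.of_forall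
      fun m i => ?_)
    · simpa only [hinj.eq_iff] using (tendsto_tent (x i₀) (x i)).const_mul (c i)
    · rw [norm_mul, Real.norm_of_nonneg (le_max_left 0 _)]
      refine mul_le_of_le_one_right (norm_nonneg _) (max_le zero_le_one ?_)
      have : 0 ≤ (m : ℝ) * |x i - x i₀| := by positivity
      linarith
  have hzero (m : ℕ) : ∑' i, c i * max 0 (1 - m * |x i - x i₀|) = 0 :=
    tsum_mul_comp_eq_zero_of_moments hc hx hmom
      (f := fun y => max 0 (1 - m * |y - x i₀|)) (by fun_prop)
  simp only [hzero, mul_ite, mul_one, mul_zero, tsum_ite_eq] at hlim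
  exact (tendsto_nhds_unique tendsto_const_nhds hlim).symm

end Moments

theorem abs_exp_mul_le_exp_mul {s M t : ℝ} (hs : s ≤ M) (ht : 0 ≤ t) :
    |Real.exp (s * t)| ≤ Real.exp (M * t) := by
  rw [abs_of_pos (Real.exp_pos _)]
  exact Real.exp_le_exp.2 (mul_le_mul_of_nonneg_right hs ht)

theorem HilbertBasis.sum_inner_mul_inner_eq_zero_of_inner_diagonal_exp_eq_zero
    {κ E : Type*} {F : κ → Type*} [∀ n, Fintype (F n)] [NormedAddCommGroup E]
    [InnerProductSpace ℝ E] (b : HilbertBasis (Σ n, F n) ℝ E) {μ : κ → ℝ} {M : ℝ}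
    (hM : ∀ n, μ n ≤ M) (hμ : Function.Injective μ) {x y : E}
    (h : ∀ k : ℕ, ⟪b.diagonal (fun i => Real.exp (μ i.1 * k)) x, y⟫ = 0) (n : κ) :
    ∑ j, ⟪x, b ⟨n, j⟩⟫ * ⟪b ⟨n, j⟩, y⟫ = 0 := by
  have hbound (k : ℕ) (i : Σ n, F n) : |Real.exp (μ i.1 * k)| ≤ Real.exp (M * k) :=
    abs_exp_mul_le_exp_mul (hM i.1) k.cast_nonneg
  have hmom (k : ℕ) :
      ∑' n, (∑ j, ⟪x, b ⟨n, j⟩⟫ * ⟪b ⟨n, j⟩, y⟫) * Real.exp (μ n) ^ k = 0 := by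
    rw [← h k,
      ← ((b.hasSum_inner_diagonal (hbound k) x y).sigma fun n => hasSum_fintype _).tsum_eq]
    congr 1 with m
    rw [Finset.sum_mul]
    refine Finset.sum_congr rfl fun j _ => ?_
    rw [← Real.exp_nat_mul, mul_comm (k : ℝ)]
    ring
  refine congrFun (eq_zero_of_moments (a := 0) (b := Real.exp M) ?_ ?_
    (Real.exp_injective.comp hμ) hmom) n
  · exact ((b.hasSum_inner_mul_inner x y).sigma fun n => hasSum_fintype _).summable
  · exact fun n => ⟨(Real.exp_pos _).le, Real.exp_le_exp.2 (hM n)⟩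

theorem uncontrollable_subspace_characterization_general
    {Z : Type*} [NormedAddCommGroup Z] [InnerProductSpace ℝ Z]
    (r : ℕ → ℕ) (φ : HilbertBasis (Σ n : ℕ, Fin (r n)) ℝ Z)
    (μ : ℕ → ℝ) (hμ : BddAbove (Set.range μ)) (hdist : Function.Injective μ)
    (p : ℕ) (g : Fin p → Z)
    (S : ℝ → Z → Z)
    (hS : ∀ t x, S t x = ∑' (i : (Σ n : ℕ, Fin (r n))),
        (Real.exp (μ i.1 * t) * ⟪x, φ i⟫) • (φ i : Z)) :
    {x : Z | ∀ t : ℝ, 0 ≤ t → ∀ i : Fin p, ⟪S t x, g i⟫ = 0} =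
      closure (Submodule.span ℝ
        {x : Z | ∃ (n : ℕ) (α : Fin (r n) → ℝ),
          (∀ i : Fin p, ∑ j : Fin (r n), α j * ⟪g i, φ ⟨n, j⟩⟫ = 0) ∧
          x = ∑ j : Fin (r n), α j • (φ ⟨n, j⟩ : Z)} : Set Z) := by
  obtain ⟨M, hM⟩ := hμ
  have hM' (n : ℕ) : μ n ≤ M := hM ⟨n, rfl⟩
  have hS' (t : ℝ) : S t = φ.diagonal (fun i => Real.exp (μ i.1 * t)) := funext (hS t)
  ext x
  constructor
  · intro hx
    have hblock (n : ℕ) (i : Fin p) : ∑ j, φ.repr x ⟨n, j⟩ * ⟪g i, φ ⟨n, j⟩⟫ = 0 := by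
      rw [← φ.sum_inner_mul_inner_eq_zero_of_inner_diagonal_exp_eq_zero hM' hdist
        (fun k => hS' k ▸ hx k k.cast_nonneg i) n]
      refine Finset.sum_congr rfl fun j _ => ?_
      rw [φ.repr_apply_apply, real_inner_comm x, real_inner_comm (g i)]
    exact mem_closure_of_tendsto ((φ.hasSum_repr x).sigma fun n => hasSum_fintype _)
      (Eventually.of_forall fun s => Submodule.sum_mem _ fun n _ =>
        Submodule.subset_span ⟨n, fun j => φ.repr x ⟨n, j⟩, hblock n, rfl⟩)
  · intro hx t ht i
    have hbound (k : Σ n, Fin (r n)) : |Real.exp (μ k.1 * t)| ≤ Real.exp (M * t) :=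
      abs_exp_mul_le_exp_mul (hM' k.1) ht
    rw [hS', φ.inner_diagonal_comm hbound, ← Submodule.mem_orthogonal_singleton_iff_inner_left]
    refine closure_minimal (Submodule.span_le.2 ?_) (Submodule.isClosed_orthogonal _) hx
    rintro _ ⟨n, α, hα, rfl⟩
    rw [SetLike.mem_coe, Submodule.mem_orthogonal_singleton_iff_inner_left, sum_inner]
    simp only [real_inner_smul_left, φ.inner_basis_diagonal hbound, mul_left_comm (α _),
      ← Finset.mul_sum, hα i, mul_zero]

/-- Lemma 3.1: the uncontrollable subspace
`N = ∩_{t ≥ 0} ker (B* S(t)*)` equals the closed span of the vectors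
`∑_j α_j φ_{nj}` with `α ∈ ker B_n`, i.e.
`∑_j α_j ⟪g_i, φ_{nj}⟫ = 0` for every `i`. -/
theorem uncontrollable_subspace_characterization
    {Z : Type*} [NormedAddCommGroup Z] [InnerProductSpace ℝ Z] [CompleteSpace Z]
    (r : ℕ → ℕ) (φ : HilbertBasis (Σ n : ℕ, Fin (r n)) ℝ Z)
    (μ : ℕ → ℝ) (hμ : BddAbove (Set.range μ)) (hdist : Function.Injective μ)
    (p : ℕ) (g : Fin p → Z)
    (S : ℝ → Z → Z)
    (hS : ∀ t x, S t x = ∑' (i : (Σ n : ℕ, Fin (r n))),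
        (Real.exp (μ i.1 * t) * ⟪x, φ i⟫) • (φ i : Z)) :
    {x : Z | ∀ t : ℝ, 0 ≤ t → ∀ i : Fin p, ⟪S t x, g i⟫ = 0} =
      closure (Submodule.span ℝ
        {x : Z | ∃ (n : ℕ) (α : Fin (r n) → ℝ),
          (∀ i : Fin p, ∑ j : Fin (r n), α j * ⟪g i, φ ⟨n, j⟩⟫ = 0) ∧
          x = ∑ j : Fin (r n), α j • (φ ⟨n, j⟩ : Z)} : Set Z) :=
  uncontrollable_subspace_characterization_general r φ μ hμ hdist p g S hS
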